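/- For all i ≥ 2 and all n with 13·2^{i-2} - 1 ≤ n ≤ 5·2^i, the set {2^i - 1, 3·2^{i-1} - 1, 2^{i+1} - 1, 3·2^i - 1} is a string attractor for the prefix of length n of the Thue-Morse word. -/

import Mathlib

/-!
Write `S i = {2^i - 1, 3·2^(i-1) - 1, 2^(i+1) - 1, 3·2^i - 1}`. Since `t(2k + r)` depends only on
`t(k)` and `r`, the factor `t[a..a+d]` is determined by its parent `t[a/2..(a+d)/2]` and the parity
of `a`, and an occurrence of the parent at `q` yields one of the factor at `2q + a % 2`. As
`2 · S i + 1 ⊆ S (i+1)`, an occurrence of the parent touching `s ∈ S i` yields one touching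
`2s + 1`, provided, when the factor ends at an even position, that `s` is not the last letter of
the parent's occurrence. So one proves by induction on `i`, simultaneously for `k = 0` and `k = 1`,
that for `13·2^(i-2) - 1 + k ≤ n ≤ 5·2^i` every factor of length `> k` of the prefix of length `n`
occurs in it with a point of `S i` among the first `length - k` letters of the occurrence. Single
letters and factors of length two starting at an even position have no parent of the required
kind, but all four words of length two occur at positions `s, s + 1` with `s ∈ S i`. The case
`i = 2` is a finite check.
-/

def IsAttractor {α : Type*} (w : ℕ → α) (n : ℕ) (S : Finset ℕ) : Prop :=
  (∀ s ∈ S, s < n) ∧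
  ∀ i j : ℕ, i ≤ j → j < n →
    ∃ i' j' : ℕ, i' ≤ j' ∧ j' < n ∧ j' - i' = j - i ∧
      (∀ t, t ≤ j - i → w (i' + t) = w (i + t)) ∧
      ∃ s ∈ S, i' ≤ s ∧ s ≤ j'

def tmStep : ℕ → List ℕ
  | 0 => [0, 1]
  | _ => [1, 0]

def tmIter : ℕ → List ℕ
  | 0 => [0]
  | k + 1 => (tmIter k).flatMap tmStep

/-- The Thue-Morse word: fixed point, starting with 0, of 0 → 01, 1 → 10. -/
def tm (n : ℕ) : ℕ := (tmIter (n + 1)).getD n 0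

lemma length_tmStep (a : ℕ) : (tmStep a).length = 2 := by
  cases a <;> rfl

lemma length_tmIter (k : ℕ) : (tmIter k).length = 2 ^ k := by
  induction k with
  | zero => rfl
  | succ k ih => simp [tmIter, List.length_flatMap, length_tmStep, ih, pow_succ, mul_comm]

lemma tmIter_prefix_tmIter_succ (k : ℕ) : tmIter k <+: tmIter (k + 1) := by
  induction k with
  | zero => exact ⟨[1], rfl⟩
  | succ k ih => exact ih.flatMap tmStep

lemma tmIter_prefix_of_le {k m : ℕ} (h : k ≤ m) : tmIter k <+: tmIter m := by
  induction m, h using Nat.le_induction with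
  | base => exact List.prefix_refl _
  | succ m _ ih => exact ih.trans (tmIter_prefix_tmIter_succ m)

lemma lt_two_pow_succ (n : ℕ) : n < 2 ^ (n + 1) :=
  Nat.lt_two_pow_self.trans (Nat.pow_lt_pow_succ one_lt_two)

lemma getD_tmIter_of_le {k m n : ℕ} (hkm : k ≤ m) (hn : n < 2 ^ k) :
    (tmIter m).getD n 0 = (tmIter k).getD n 0 := by
  obtain ⟨t, ht⟩ := tmIter_prefix_of_le hkm
  rw [← ht, List.getD_append _ _ _ _ (by rwa [length_tmIter])]

lemma tm_eq_getD_tmIter {m n : ℕ} (h : n < 2 ^ m) : tm n = (tmIter m).getD n 0 := by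
  rcases le_total m (n + 1) with hm | hm
  · exact getD_tmIter_of_le hm h
  · exact (getD_tmIter_of_le hm (lt_two_pow_succ n)).symm

lemma getD_flatMap_tmStep (l : List ℕ) {k r : ℕ} (hk : k < l.length) (hr : r < 2) :
    (l.flatMap tmStep).getD (2 * k + r) 0 = (tmStep (l.getD k 0)).getD r 0 := by
  induction l generalizing k with
  | nil => simp at hk
  | cons a l ih =>
    rw [List.flatMap_cons]
    cases k with
    | zero =>
      rw [Nat.mul_zero, Nat.zero_add, List.getD_append _ _ _ _ (by rw [length_tmStep]; omega)]
      rfl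
    | succ k =>
      rw [List.getD_append_right _ _ _ _ (by rw [length_tmStep]; omega), length_tmStep,
        show 2 * (k + 1) + r - 2 = 2 * k + r by omega]
      exact ih (by simpa using hk)

lemma tm_two_mul_add (k : ℕ) {r : ℕ} (hr : r < 2) :
    tm (2 * k + r) = (tmStep (tm k)).getD r 0 := by
  have hk := lt_two_pow_succ k
  rw [tm_eq_getD_tmIter (m := k + 2) (by rw [pow_succ]; omega), tmIter,
    getD_flatMap_tmStep _ (by rwa [length_tmIter]) hr]
  rfl

lemma le_one_of_mem_tmIter {m x : ℕ} (hx : x ∈ tmIter m) : x ≤ 1 := by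
  induction m generalizing x with
  | zero => simp_all [tmIter]
  | succ m ih =>
    obtain ⟨a, -, hx⟩ := List.mem_flatMap.mp hx
    cases a <;> simp only [tmStep, List.mem_cons, List.not_mem_nil, or_false] at hx <;> omega

lemma tm_le_one (n : ℕ) : tm n ≤ 1 := by
  rw [tm, List.getD_eq_getElem _ _ (by rw [length_tmIter]; exact lt_two_pow_succ n)]
  exact le_one_of_mem_tmIter (List.getElem_mem _)

lemma tm_two_mul (k : ℕ) : tm (2 * k) = tm k := by
  rw [← Nat.add_zero (2 * k), tm_two_mul_add k zero_lt_two]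
  rcases Nat.le_one_iff_eq_zero_or_eq_one.mp (tm_le_one k) with h | h <;> rw [h] <;> rfl

lemma tm_two_mul_add_one (k : ℕ) : tm (2 * k + 1) = 1 - tm k := by
  rw [tm_two_mul_add k one_lt_two]
  rcases Nat.le_one_iff_eq_zero_or_eq_one.mp (tm_le_one k) with h | h <;> rw [h] <;> rfl

lemma tm_two_pow (j : ℕ) : tm (2 ^ j) = 1 := by
  induction j with
  | zero => decide
  | succ j ih => rw [pow_succ', tm_two_mul, ih]

lemma tm_three_mul_two_pow (j : ℕ) : tm (3 * 2 ^ j) = 0 := by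
  induction j with
  | zero => decide
  | succ j ih => rw [pow_succ', mul_left_comm, tm_two_mul, ih]

lemma tm_two_pow_sub_one (j : ℕ) : tm (2 ^ j - 1) = j % 2 := by
  induction j with
  | zero => decide
  | succ j ih =>
    have : 2 ^ (j + 1) - 1 = 2 * (2 ^ j - 1) + 1 := by
      have := Nat.one_le_two_pow (n := j)
      rw [pow_succ]
      omega
    rw [this, tm_two_mul_add_one, ih]
    omega

lemma tm_three_mul_two_pow_sub_one (j : ℕ) : tm (3 * 2 ^ j - 1) = (j + 1) % 2 := by
  induction j with
  | zero => decide
  | succ j ih =>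
    have : 3 * 2 ^ (j + 1) - 1 = 2 * (3 * 2 ^ j - 1) + 1 := by
      have := Nat.one_le_two_pow (n := j)
      rw [pow_succ]
      omega
    rw [this, tm_two_mul_add_one, ih]
    omega

section Covering

variable {α : Type*}

def OccursCovered (w : ℕ → α) (n : ℕ) (S : Finset ℕ) (k a d : ℕ) : Prop :=
  ∃ q, q + d < n ∧ (∀ u ≤ d, w (q + u) = w (a + u)) ∧ ∃ s ∈ S, q ≤ s ∧ s + k ≤ q + d

def CoversFactors (w : ℕ → α) (n : ℕ) (S : Finset ℕ) (k : ℕ) : Prop :=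
  ∀ a d, k ≤ d → a + d < n → OccursCovered w n S k a d

lemma isAttractor_of_coversFactors {w : ℕ → α} {n : ℕ} {S : Finset ℕ} (hS : ∀ s ∈ S, s < n)
    (h : CoversFactors w n S 0) : IsAttractor w n S := by
  refine ⟨hS, fun i j hij hj => ?_⟩
  obtain ⟨q, hq, hmatch, s, hs, hqs, hsq⟩ := h i (j - i) (Nat.zero_le _) (by omega)
  exact ⟨q, q + (j - i), by omega, hq, by omega, hmatch, s, hs, hqs, by omega⟩

end Covering

lemma occursCovered_of_half {n n' k k' a d : ℕ} {S T : Finset ℕ}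
    (hST : ∀ s ∈ S, 2 * s + 1 ∈ T) (h : OccursCovered tm n' S k' (a / 2) ((a + d) / 2 - a / 2))
    (hn : 2 * n' + (a + d) % 2 ≤ n + 1) (hk : k + 1 ≤ 2 * k' + (a + d) % 2) :
    OccursCovered tm n T k a d := by
  obtain ⟨q, hq, hmatch, s, hs, hqs, hsq⟩ := h
  refine ⟨2 * q + a % 2, by omega, fun u hu => ?_, 2 * s + 1, hST s hs, by omega, by omega⟩
  have hr : (a % 2 + u) % 2 < 2 := Nat.mod_lt _ two_pos
  calc tm (2 * q + a % 2 + u) = tm (2 * (q + (a % 2 + u) / 2) + (a % 2 + u) % 2) := by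
        congr 1; omega
    _ = tm (2 * (a / 2 + (a % 2 + u) / 2) + (a % 2 + u) % 2) := by
        rw [tm_two_mul_add _ hr, tm_two_mul_add _ hr, hmatch _ (by omega)]
    _ = tm (a + u) := by congr 1; omega

def tmAttractorSet (i : ℕ) : Finset ℕ :=
  {2 ^ i - 1, 3 * 2 ^ (i - 1) - 1, 2 ^ (i + 1) - 1, 3 * 2 ^ i - 1}

lemma lt_of_mem_tmAttractorSet {i s : ℕ} (hs : s ∈ tmAttractorSet i) : s < 3 * 2 ^ i := by
  have h₁ : 2 ^ (i - 1) ≤ 2 ^ i := Nat.pow_le_pow_right two_pos (Nat.sub_le _ _)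
  have h₂ : 2 ^ (i + 1) = 2 * 2 ^ i := pow_succ' 2 i
  have h₃ : 1 ≤ 2 ^ i := Nat.one_le_two_pow
  simp only [tmAttractorSet, Finset.mem_insert, Finset.mem_singleton] at hs
  rcases hs with rfl | rfl | rfl | rfl <;> omega

lemma two_mul_add_one_mem_tmAttractorSet (j : ℕ) :
    ∀ s ∈ tmAttractorSet (j + 1), 2 * s + 1 ∈ tmAttractorSet (j + 2) := by
  intro s hs
  have h₁ : 2 ^ (j + 1) = 2 * 2 ^ j := pow_succ' 2 j
  have h₂ : 2 ^ (j + 2) = 4 * 2 ^ j := by ring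
  have h₃ : 2 ^ (j + 3) = 8 * 2 ^ j := by ring
  have h₄ : 1 ≤ 2 ^ j := Nat.one_le_two_pow
  simp only [tmAttractorSet, Finset.mem_insert, Finset.mem_singleton, Nat.add_sub_cancel,
    show j + 2 - 1 = j + 1 by omega, show j + 2 + 1 = j + 3 by omega] at hs ⊢
  omega

lemma exists_mem_tmAttractorSet_pair (j a : ℕ) :
    ∃ s ∈ tmAttractorSet (j + 1), ∀ u ≤ 1, tm (s + u) = tm (a + u) := by
  suffices h : ∃ s ∈ tmAttractorSet (j + 1), tm s = tm a ∧ tm (s + 1) = tm (a + 1) by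
    obtain ⟨s, hs, h₀, h₁⟩ := h
    refine ⟨s, hs, fun u hu => ?_⟩
    rcases Nat.le_one_iff_eq_zero_or_eq_one.mp hu with rfl | rfl
    exacts [h₀, h₁]
  have h₁ : 1 ≤ 2 ^ (j + 1) := Nat.one_le_two_pow
  have h₂ : 1 ≤ 2 ^ (j + 2) := Nat.one_le_two_pow
  have h₃ : 1 ≤ 3 * 2 ^ j := by have := Nat.one_le_two_pow (n := j); omega
  have h₄ : 1 ≤ 3 * 2 ^ (j + 1) := by have := Nat.one_le_two_pow (n := j + 1); omega
  simp only [tmAttractorSet, Nat.add_sub_cancel, Finset.mem_insert, Finset.mem_singleton,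
    exists_eq_or_imp, exists_eq_left, show j + 1 + 1 = j + 2 by omega]
  rw [Nat.sub_add_cancel h₁, Nat.sub_add_cancel h₂, Nat.sub_add_cancel h₃, Nat.sub_add_cancel h₄,
    tm_two_pow_sub_one, tm_two_pow_sub_one, tm_two_pow, tm_two_pow,
    tm_three_mul_two_pow_sub_one, tm_three_mul_two_pow_sub_one, tm_three_mul_two_pow,
    tm_three_mul_two_pow]
  have := tm_le_one a
  have := tm_le_one (a + 1)
  omega

lemma coversFactors_succ {j k n : ℕ} (hk : k ≤ 1)
    (ih : ∀ k' ≤ 1, ∀ n', 13 * 2 ^ j - 1 + k' ≤ n' → n' ≤ 20 * 2 ^ j →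
      CoversFactors tm n' (tmAttractorSet (j + 2)) k')
    (hn₁ : 26 * 2 ^ j - 1 + k ≤ n) (hn₂ : n ≤ 40 * 2 ^ j) :
    CoversFactors tm n (tmAttractorSet (j + 3)) k := by
  have hpow : 1 ≤ 2 ^ j := Nat.one_le_two_pow
  intro a d hkd had
  by_cases hshort : d ≤ 1 ∧ a % 2 = 0
  · obtain ⟨s, hs, hmatch⟩ := exists_mem_tmAttractorSet_pair (j + 2) a
    have hsn : s < 24 * 2 ^ j := by
      have := lt_of_mem_tmAttractorSet hs
      rwa [show 3 * 2 ^ (j + 3) = 24 * 2 ^ j by ring] at this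
    exact ⟨s, by omega, fun u hu => hmatch u (by omega), s, hs, le_rfl, by omega⟩
  · have hlift := two_mul_add_one_mem_tmAttractorSet (j + 1)
    rcases Nat.mod_two_eq_zero_or_one (a + d) with heven | hodd
    · exact occursCovered_of_half hlift
        (ih 1 le_rfl ((n + 1) / 2) (by omega) (by omega) _ _ (by omega) (by omega))
        (by omega) (by omega)
    · exact occursCovered_of_half hlift
        (ih k hk (n / 2) (by omega) (by omega) _ _ (by omega) (by omega))
        (by omega) (by omega)

def tmPrefix : List ℕ :=
  [0, 1, 1, 0, 1, 0, 0, 1, 1, 0, 0, 1, 0, 1, 1, 0, 1, 0, 0, 1, 0, 1, 1, 0, 0, 1, 1, 0, 1, 0, 0, 1]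

lemma tm_eq_getD_tmPrefix {x : ℕ} (hx : x < 32) : tm x = tmPrefix.getD x 0 := by
  rw [tm_eq_getD_tmIter (m := 5) hx]
  rfl

set_option synthInstance.maxSize 1000 in
lemma coversFactors_base {k n : ℕ} (hk : k ≤ 1) (hn₁ : 12 + k ≤ n) (hn₂ : n ≤ 20) :
    CoversFactors tm n (tmAttractorSet 2) k := by
  -- An occurrence that ends before position `12 + k` or starts no later than the factor lies in
  -- every admissible prefix containing the factor, so one finite check serves all `n`.
  have hcert : ∀ k < 2, ∀ a < 20, ∀ d < 20 - a, k ≤ d → ∃ q < 20, (q + d < 12 + k ∨ q ≤ a) ∧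
      (∀ u < d + 1, tmPrefix.getD (q + u) 0 = tmPrefix.getD (a + u) 0) ∧
      ∃ s ∈ [3, 5, 7, 11], q ≤ s ∧ s + k ≤ q + d := by
    decide
  intro a d hkd had
  obtain ⟨q, -, hq, hmatch, s, hs, hqs, hsq⟩ := hcert k (by omega) a (by omega) d (by omega) hkd
  refine ⟨q, by omega, fun u hu => ?_, s, ?_, hqs, hsq⟩
  · rw [tm_eq_getD_tmPrefix (by omega), tm_eq_getD_tmPrefix (by omega)]
    exact hmatch u (by omega)
  · simp only [List.mem_cons, List.not_mem_nil, or_false] at hs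
    simp only [tmAttractorSet, Finset.mem_insert, Finset.mem_singleton]
    omega

lemma coversFactors_tmAttractorSet (j : ℕ) {k n : ℕ} (hk : k ≤ 1)
    (hn₁ : 13 * 2 ^ j - 1 + k ≤ n) (hn₂ : n ≤ 20 * 2 ^ j) :
    CoversFactors tm n (tmAttractorSet (j + 2)) k := by
  induction j generalizing k n with
  | zero => exact coversFactors_base hk (by simpa using hn₁) (by simpa using hn₂)
  | succ j ih =>
    rw [pow_succ] at hn₁ hn₂
    exact coversFactors_succ hk (fun k' hk' n' h₁ h₂ => ih hk' h₁ h₂) (by omega) (by omega)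

/-- For `i ≥ 2` and `13·2^{i-2} - 1 ≤ n ≤ 5·2^i`, the set
`{2^i - 1, 3·2^{i-1} - 1, 2^{i+1} - 1, 3·2^i - 1}` is a string attractor for
the length-`n` prefix of Thue-Morse. -/
theorem tm_attractor_a :
    ∀ i : ℕ, 2 ≤ i → ∀ n : ℕ, 13 * 2 ^ (i - 2) - 1 ≤ n → n ≤ 5 * 2 ^ i →
      IsAttractor tm n
        ({2 ^ i - 1, 3 * 2 ^ (i - 1) - 1, 2 ^ (i + 1) - 1, 3 * 2 ^ i - 1} : Finset ℕ) := by
  intro i hi n hn₁ hn₂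
  obtain ⟨j, rfl⟩ : ∃ j, i = j + 2 := ⟨i - 2, by omega⟩
  rw [Nat.add_sub_cancel] at hn₁
  rw [pow_add] at hn₂
  have hpow : 1 ≤ 2 ^ j := Nat.one_le_two_pow
  refine isAttractor_of_coversFactors (S := tmAttractorSet (j + 2)) (fun s hs => ?_)
    (coversFactors_tmAttractorSet j zero_le_one (by omega) (by omega))
  have := lt_of_mem_tmAttractorSet hs
  rw [pow_add] at this
  omega
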